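/- Let p ∈ (0,1), let r > 0, let T > 1 be a real number, set s = (1−p)^{−T} (so s > 1), and define f(β) = (r + β)·(1 − s^{−1/β})/p for β ∈ [1, T]. If there exists β₀ ∈ [1, T] with f′(β₀) = 0, then f is monotonically increasing on [1, β₀] and monotonically decreasing on [β₀, T]. -/

import Mathlib

/-!
With `c = log s > 0` we have `f β = (r + β) (1 - exp (-c / β)) / p`, and
`f' β = exp (-c / β) (c / β)² (q (c / β) - r / c) / p` where `q x = (exp x - 1 - x) / x²`.
Since `q` is strictly increasing on `(0, ∞)`, the sign of `f' β` is that of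
`q (c / β) - q (c / β₀)`, a nonincreasing function of `β` that vanishes at the critical point `β₀`.
-/

open Real Set

theorem pos_of_hasDerivAt_pos_of_eq_zero {φ φ' : ℝ → ℝ} (hφ : ∀ x, HasDerivAt φ (φ' x) x)
    (h0 : φ 0 = 0) (hφ' : ∀ x, 0 < x → 0 < φ' x) {x : ℝ} (hx : 0 < x) : 0 < φ x := by
  have hmono : StrictMonoOn φ (Ici 0) :=
    strictMonoOn_of_hasDerivWithinAt_pos (convex_Ici 0)
      (fun y _ => (hφ y).continuousAt.continuousWithinAt)
      (fun y _ => (hφ y).hasDerivWithinAt)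
      (fun y hy => hφ' y (by simpa using hy))
  simpa [h0] using hmono self_mem_Ici hx.le hx

theorem sub_one_mul_exp_add_one_pos {x : ℝ} (hx : x ≠ 0) : 0 < (x - 1) * exp x + 1 := by
  have h := add_one_lt_exp (neg_ne_zero.mpr hx)
  have hE : exp (-x) * exp x = 1 := by rw [← exp_add, neg_add_cancel, exp_zero]
  nlinarith [exp_pos x]

theorem sub_two_mul_exp_add_add_two_pos {x : ℝ} (hx : 0 < x) :
    0 < (x - 2) * exp x + x + 2 := by
  refine pos_of_hasDerivAt_pos_of_eq_zero (φ := fun x => (x - 2) * exp x + x + 2)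
    (fun y => ?_) (by norm_num) (fun y hy => sub_one_mul_exp_add_one_pos hy.ne') hx
  exact ((((hasDerivAt_id' y).sub_const 2).mul (hasDerivAt_exp y)).add
    (hasDerivAt_id' y)).add_const 2 |>.congr_deriv (by ring)

noncomputable def expRemainderDivSq (x : ℝ) : ℝ := (exp x - 1 - x) / x ^ 2

theorem strictMonoOn_expRemainderDivSq : StrictMonoOn expRemainderDivSq (Ioi 0) := by
  have hderiv (x : ℝ) (hx : x ≠ 0) : HasDerivAt expRemainderDivSq
      (x * ((x - 2) * exp x + x + 2) / (x ^ 2) ^ 2) x :=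
    (((hasDerivAt_exp x).sub_const 1).sub (hasDerivAt_id' x)).div (hasDerivAt_pow 2 x)
      (pow_ne_zero 2 hx) |>.congr_deriv (by simp only [Pi.sub_apply]; ring)
  refine strictMonoOn_of_hasDerivWithinAt_pos (convex_Ioi 0) (f' := fun x =>
      x * ((x - 2) * exp x + x + 2) / (x ^ 2) ^ 2)
    (fun x hx => (hderiv x (ne_of_gt hx)).continuousAt.continuousWithinAt)
    (fun x hx => ?_) (fun x hx => ?_)
  all_goals rw [interior_Ioi, mem_Ioi] at hx
  · exact (hderiv x hx.ne').hasDerivWithinAt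
  have := sub_two_mul_exp_add_add_two_pos hx
  positivity

theorem hasDerivAt_add_mul_one_sub_exp_neg_div (r : ℝ) {c x : ℝ} (hc : c ≠ 0) (hx : x ≠ 0) :
    HasDerivAt (fun β => (r + β) * (1 - exp (-c / β)))
      (exp (-c / x) * (c / x) ^ 2 * (expRemainderDivSq (c / x) - r / c)) x := by
  have hinner : HasDerivAt (fun β => -c / β) (c / x ^ 2) x := by
    simpa only [div_eq_mul_inv, mul_neg, neg_mul, neg_neg] using (hasDerivAt_inv hx).const_mul (-c)
  refine (((hasDerivAt_id' x).const_add r).mul (hinner.exp.const_sub 1)).congr_deriv ?_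
  have hE : exp (c / x) * exp (-(c / x)) = 1 := by rw [← exp_add, add_neg_cancel, exp_zero]
  simp only [expRemainderDivSq, neg_div]
  field_simp
  linear_combination -x ^ 2 * hE

theorem monotoneOn_antitoneOn_of_hasDerivAt_mul_sub {f w g : ℝ → ℝ} {a m b : ℝ}
    (hf : ∀ x ∈ Icc a b, HasDerivAt f (w x * (g x - g m)) x) (hw : ∀ x ∈ Icc a b, 0 ≤ w x)
    (hg : AntitoneOn g (Icc a b)) (hm : m ∈ Icc a b) :
    MonotoneOn f (Icc a m) ∧ AntitoneOn f (Icc m b) := by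
  have hsub₁ : Icc a m ⊆ Icc a b := Icc_subset_Icc_right hm.2
  have hsub₂ : Icc m b ⊆ Icc a b := Icc_subset_Icc_left hm.1
  constructor
  · refine monotoneOn_of_hasDerivWithinAt_nonneg (f' := fun x => w x * (g x - g m))
      (convex_Icc a m) (fun x hx => (hf x (hsub₁ hx)).continuousAt.continuousWithinAt)
      (fun x hx => (hf x (hsub₁ (interior_subset hx))).hasDerivWithinAt) (fun x hx => ?_)
    rw [interior_Icc] at hx
    have hx' := hsub₁ (Ioo_subset_Icc_self hx)
    exact mul_nonneg (hw x hx') (sub_nonneg.mpr (hg hx' hm hx.2.le))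
  · refine antitoneOn_of_hasDerivWithinAt_nonpos (f' := fun x => w x * (g x - g m))
      (convex_Icc m b) (fun x hx => (hf x (hsub₂ hx)).continuousAt.continuousWithinAt)
      (fun x hx => (hf x (hsub₂ (interior_subset hx))).hasDerivWithinAt) (fun x hx => ?_)
    rw [interior_Icc] at hx
    have hx' := hsub₂ (Ioo_subset_Icc_self hx)
    exact mul_nonpos_of_nonneg_of_nonpos (hw x hx') (sub_nonpos.mpr (hg hm hx' hx.1.le))

theorem ace_unimodal_general (p r T s : ℝ) (hp0 : 0 < p) (hp1 : p < 1)
    (hs : s = (1 - p) ^ (-T))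
    (f : ℝ → ℝ) (hf : ∀ β, f β = (r + β) * (1 - s ^ (-1 / β)) / p)
    (β₀ : ℝ) (hβ₀ : β₀ ∈ Set.Icc (1 : ℝ) T) (hcrit : deriv f β₀ = 0) :
    MonotoneOn f (Set.Icc 1 β₀) ∧ AntitoneOn f (Set.Icc β₀ T) := by
  have hc : 0 < log s := by
    have hlog : log (1 - p) < 0 := log_neg (by linarith) (by linarith)
    rw [hs, log_rpow (by linarith)]
    exact mul_pos_of_neg_of_neg (by linarith [hβ₀.1, hβ₀.2]) hlog
  set c := log s
  set w : ℝ → ℝ := fun x => exp (-c / x) * (c / x) ^ 2 / p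
  have hw : ∀ x, 0 < x → 0 < w x := fun x hx => by positivity
  have hf' (x : ℝ) (hx : 0 < x) :
      HasDerivAt f (w x * (expRemainderDivSq (c / x) - r / c)) x := by
    have hfexp : f = fun β => (r + β) * (1 - exp (-c / β)) / p := funext fun β => by
      rw [hf, rpow_def_of_pos (hs ▸ rpow_pos_of_pos (by linarith) _), mul_div_assoc', mul_neg_one]
    rw [hfexp]
    exact ((hasDerivAt_add_mul_one_sub_exp_neg_div r hc.ne' hx.ne').div_const p).congr_deriv
      (by ring)
  have hβ₀pos : 0 < β₀ := by linarith [hβ₀.1]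
  have hcrit' : expRemainderDivSq (c / β₀) = r / c := by
    rw [(hf' β₀ hβ₀pos).deriv, mul_eq_zero, sub_eq_zero] at hcrit
    exact hcrit.resolve_left (hw β₀ hβ₀pos).ne'
  refine monotoneOn_antitoneOn_of_hasDerivAt_mul_sub (g := fun x => expRemainderDivSq (c / x))
    (fun x hx => hcrit' ▸ hf' x (by linarith [hx.1])) (fun x hx => (hw x (by linarith [hx.1])).le)
    (fun x hx y hy hxy => ?_) hβ₀
  have hx0 : 0 < x := by linarith [hx.1]
  exact strictMonoOn_expRemainderDivSq.monotoneOn (div_pos hc (by linarith)) (div_pos hc hx0)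
    (div_le_div_of_nonneg_left hc.le hx0 hxy)

/-- For `s = (1-p)^(-T) > 1` and `f β = (r + β)*(1 - s^(-1/β))/p` on `[1, T]`,
if `f′ β₀ = 0` for some `β₀ ∈ [1, T]`, then `f` is monotonically increasing on
`[1, β₀]` and monotonically decreasing on `[β₀, T]`. -/
theorem ace_unimodal (p r T s : ℝ) (hp0 : 0 < p) (hp1 : p < 1)
    (hr : 0 < r) (hT : 1 < T) (hs : s = (1 - p) ^ (-T))
    (f : ℝ → ℝ) (hf : ∀ β, f β = (r + β) * (1 - s ^ (-1 / β)) / p)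
    (β₀ : ℝ) (hβ₀ : β₀ ∈ Set.Icc (1 : ℝ) T) (hcrit : deriv f β₀ = 0) :
    MonotoneOn f (Set.Icc 1 β₀) ∧ AntitoneOn f (Set.Icc β₀ T) :=
  ace_unimodal_general p r T s hp0 hp1 hs f hf β₀ hβ₀ hcrit
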